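/- Let α_1 ≥ α_2 ≥ … ≥ α_n be positive integers with n > 2, let S = Σ_{i=1}^n α_i with S > 2, let β be an integer with 0 < β < S, and let k < n be a positive integer. Consider the EAS instance with T = 2n − k + 2 time slots and n jobs, where job i has r_i = i + 1, d_i = 2n − k + 2, and e_i = S²n² + α_i·(Sn), and where h_1 = k·(S²n²) + β·(Sn); h_t = S − α_{t−1} for t ∈ {2,…,n+1}; h_{n+2} = (n−k)·(S²n²) + (S−β)·(Sn) − S·(n−k−1) − β; and h_t = 0 for t ∈ {n+3,…,2n−k+2}. Then every feasible schedule that schedules all n jobs satisfies: exactly k jobs are scheduled at slots in {2,…,n+1}, the remaining n − k jobs are scheduled at slots in {n+3,…,2n−k+2} (in particular no job is scheduled at slot 1 or slot n+2), and the total energy requirement of the k jobs scheduled in {2,…,n+1} equals k·(S²n²) + β·(Sn), so that the corresponding α-values sum to exactly β. -/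

import Mathlib

/-!
A feasible schedule never drives the stored energy below zero, because every slot harvests a
nonnegative amount. Energies are written in base `Sn`: the digit `S²n²` counts jobs and the digit
`Sn` carries their `α`-values, with `h 1` encoding `k` jobs of total value `β`.

Since the slots `n+3, …, 2n-k+2` hold at most `n - k` jobs, at least `k` jobs run in the slots
`2, …, n+1`; the energy available before slot `n+2` then pays for exactly `k` of them, of total
value at most `β`. The energy left at the end is `Sk - β - ∑ h (σ i)`, which rules out slot `n+2`
and shows that the values `α (σ i - 1)` of the slots used early sum to at least `β`. As no job runs
before its release time `i + 1` and `α` is antitone, `α (σ i - 1) ≤ α i`, which closes the gap.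
-/

/-- The energy available immediately before slot `t`:
the total energy harvestable at slots `1,…,t-1`, minus, for each job `i ∈ J`
scheduled at a slot `σ i < t`, its energy requirement `e i` plus the harvestable
energy `h (σ i)` lost at its execution slot. -/
def energyBefore (e h : ℕ → ℤ) (J : Finset ℕ) (σ : ℕ → ℕ) (t : ℕ) : ℤ :=
  (∑ τ ∈ Finset.Icc 1 (t - 1), h τ) -
    ∑ i ∈ J.filter (fun i => σ i < t), (e i + h (σ i))

/-- A schedule `(J, σ)` is feasible for an EAS instance with `n` jobs, `T` slots,
release times `r`, due dates `d`, energy requirements `e` and harvest profile `h`. -/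
def IsFeasible (n T : ℕ) (r d : ℕ → ℕ) (e h : ℕ → ℤ)
    (J : Finset ℕ) (σ : ℕ → ℕ) : Prop :=
  J ⊆ Finset.Icc 1 n ∧ Set.InjOn σ ↑J ∧
    ∀ i ∈ J, 1 ≤ σ i ∧ σ i ≤ T ∧ r i ≤ σ i ∧ σ i ≤ d i ∧
      e i ≤ energyBefore e h J σ (σ i)

open Finset

theorem filter_apply_eq_apply_eq_singleton {ι κ : Type*} [DecidableEq κ] {s : Finset ι}
    {f : ι → κ} (hinj : Set.InjOn f s) {i : ι} (hi : i ∈ s) :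
    s.filter (fun j => f j = f i) = {i} := by
  ext j
  simp only [mem_filter, mem_singleton]
  exact ⟨fun ⟨hj, hf⟩ => hinj hj hi hf, by rintro rfl; exact ⟨hi, rfl⟩⟩

section Schedule

variable {n T : ℕ} {r d : ℕ → ℕ} {e h : ℕ → ℤ} {J : Finset ℕ} {σ : ℕ → ℕ}

theorem energyBefore_succ {t : ℕ} (ht : 1 ≤ t) :
    energyBefore e h J σ (t + 1) =
      energyBefore e h J σ t + h t - ∑ i ∈ J.filter (fun i => σ i = t), (e i + h (σ i)) := by
  have hslots : Icc 1 (t + 1 - 1) = insert t (Icc 1 (t - 1)) := by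
    ext x; simp only [mem_Icc, mem_insert]; omega
  have hjobs : J.filter (fun i => σ i < t + 1) =
      J.filter (fun i => σ i < t) ∪ J.filter (fun i => σ i = t) := by
    rw [← filter_or]; exact filter_congr fun i _ => by omega
  have hdisj : Disjoint (J.filter (fun i => σ i < t)) (J.filter (fun i => σ i = t)) :=
    disjoint_filter.mpr fun i _ h1 h2 => by omega
  rw [energyBefore, energyBefore, hslots, hjobs, sum_insert (by simp only [mem_Icc]; omega),
    sum_union hdisj]
  ring

theorem energyBefore_of_forall_lt {t : ℕ} (hJ : ∀ i ∈ J, σ i < t) :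
    energyBefore e h J σ t = ∑ τ ∈ Icc 1 (t - 1), h τ - ∑ i ∈ J, (e i + h (σ i)) := by
  rw [energyBefore, filter_true_of_mem hJ]

theorem IsFeasible.energyBefore_nonneg (hf : IsFeasible n T r d e h J σ) :
    ∀ t, (∀ τ, 1 ≤ τ → τ < t → 0 ≤ h τ) → 0 ≤ energyBefore e h J σ t
  | 0, _ => by simp [energyBefore]
  | 1, _ => by
    have hnone : J.filter (fun i => σ i < 1) = ∅ :=
      filter_eq_empty_iff.mpr fun i hi => by have := (hf.2.2 i hi).1; omega
    rw [energyBefore, hnone]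
    simp
  | t + 2, hh => by
    have ih := hf.energyBefore_nonneg (t + 1) fun τ h1 h2 => hh τ h1 (by omega)
    show 0 ≤ energyBefore e h J σ (t + 1 + 1)
    rw [energyBefore_succ (by omega : 1 ≤ t + 1)]
    by_cases hocc : ∃ i ∈ J, σ i = t + 1
    · obtain ⟨i, hi, hσi⟩ := hocc
      rw [← hσi] at ih ⊢
      rw [filter_apply_eq_apply_eq_singleton hf.2.1 hi, sum_singleton]
      linarith [(hf.2.2 i hi).2.2.2.2]
    · push Not at hocc
      rw [filter_false_of_mem hocc, sum_empty]
      linarith [hh (t + 1) (by omega) (by omega)]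

theorem IsFeasible.add_one_le_apply (hf : IsFeasible n T r d e h J σ) (hr : ∀ i, r i = i + 1)
    {i : ℕ} (hi : i ∈ J) : i + 1 ≤ σ i :=
  hr i ▸ (hf.2.2 i hi).2.2.1

end Schedule

def earlyJobs (n : ℕ) (σ : ℕ → ℕ) : Finset ℕ :=
  (Icc 1 n).filter fun i => σ i ∈ Icc 2 (n + 1)

def lateJobs (n T : ℕ) (σ : ℕ → ℕ) : Finset ℕ :=
  (Icc 1 n).filter fun i => σ i ∈ Icc (n + 3) T

section Partition

variable {n T : ℕ} {σ : ℕ → ℕ}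

theorem lateJobs_eq_filter_not (hσ : ∀ i ∈ Icc 1 n, 2 ≤ σ i ∧ σ i ≤ T ∧ σ i ≠ n + 2) :
    lateJobs n T σ = (Icc 1 n).filter fun i => σ i ∉ Icc 2 (n + 1) :=
  filter_congr fun i hi => by have := hσ i hi; simp only [mem_Icc]; omega

theorem card_earlyJobs_add_card_lateJobs
    (hσ : ∀ i ∈ Icc 1 n, 2 ≤ σ i ∧ σ i ≤ T ∧ σ i ≠ n + 2) :
    #(earlyJobs n σ) + #(lateJobs n T σ) = n := by
  rw [lateJobs_eq_filter_not hσ, earlyJobs, card_filter_add_card_filter_not, Nat.card_Icc,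
    Nat.add_sub_cancel]

theorem sum_earlyJobs_add_sum_lateJobs
    (hσ : ∀ i ∈ Icc 1 n, 2 ≤ σ i ∧ σ i ≤ T ∧ σ i ≠ n + 2) (f : ℕ → ℤ) :
    ∑ i ∈ earlyJobs n σ, f i + ∑ i ∈ lateJobs n T σ, f i = ∑ i ∈ Icc 1 n, f i := by
  rw [lateJobs_eq_filter_not hσ, earlyJobs, sum_filter_add_sum_filter_not]

theorem card_lateJobs_le (hinj : Set.InjOn σ (Icc 1 n)) : #(lateJobs n T σ) ≤ T - (n + 2) := by
  have := card_le_card_of_injOn (s := lateJobs n T σ) (t := Icc (n + 3) T) σ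
    (fun i hi => (mem_filter.mp hi).2) (hinj.mono (coe_subset.mpr (filter_subset _ (Icc 1 n))))
  rw [Nat.card_Icc] at this
  omega

end Partition

-- Reading the inequality digit by digit in base `P`: the `M`-digit forces `c = k`, then the
-- `P`-digit forces `A ≤ β`.
theorem eq_and_le_of_scaled_energy_le {k c : ℕ} {S β A B M P : ℤ} (hS : 0 < S) (hP : 0 < P)
    (hM : S * P ≤ M) (hβS : β < S) (hkc : k ≤ c) (hcA : c ≤ A) (hB : B ≤ c * S)
    (hE : c * M + c * S + A * P - B ≤ k * M + β * P + (P - S)) : c = k ∧ A ≤ β := by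
  have hc : c = k := by
    by_contra hne
    have hkc' : (k : ℤ) + 1 ≤ c := by exact_mod_cast (show k + 1 ≤ c by omega)
    have hA : 1 ≤ A := by linarith
    linarith [mul_nonneg (sub_nonneg.mpr hkc') ((mul_pos hS hP).le.trans hM),
      mul_nonneg (sub_nonneg.mpr hA) hP.le, mul_pos (sub_pos.mpr hβS) hP]
  subst hc
  refine ⟨rfl, ?_⟩
  by_contra! hA
  linarith [mul_nonneg (sub_nonneg.mpr (Int.add_one_le_of_lt hA)) hP.le]

structure IsKSumReduction (n k : ℕ) (α : ℕ → ℤ) (S β : ℤ) (e h : ℕ → ℤ) : Prop where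
  α_pos : ∀ i ∈ Icc 1 n, 0 < α i
  α_antitone : ∀ i j, 1 ≤ i → i ≤ j → j ≤ n → α j ≤ α i
  S_eq : S = ∑ i ∈ Icc 1 n, α i
  β_nonneg : 0 ≤ β
  β_lt : β < S
  k_lt : k < n
  e_eq : ∀ i, e i = S ^ 2 * n ^ 2 + α i * (S * n)
  h_one : h 1 = k * (S ^ 2 * n ^ 2) + β * (S * n)
  h_mid : ∀ t, 2 ≤ t → t ≤ n + 1 → h t = S - α (t - 1)
  h_gap : h (n + 2) =
    (n - k) * (S ^ 2 * n ^ 2) + (S - β) * (S * n) - S * ((n : ℤ) - k - 1) - β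
  h_tail : ∀ t, n + 3 ≤ t → t ≤ 2 * n - k + 2 → h t = 0

namespace IsKSumReduction

variable {n k : ℕ} {α : ℕ → ℤ} {S β : ℤ} {e h : ℕ → ℤ}

theorem α_le (I : IsKSumReduction n k α S β e h) {j : ℕ} (hj : j ∈ Icc 1 n) : α j ≤ S :=
  I.S_eq ▸ single_le_sum (fun i hi => (I.α_pos i hi).le) hj

theorem n_pos (I : IsKSumReduction n k α S β e h) : 0 < n :=
  Nat.zero_lt_of_lt I.k_lt

theorem S_pos (I : IsKSumReduction n k α S β e h) : 0 < S :=
  have h1 : 1 ∈ Icc 1 n := mem_Icc.mpr ⟨le_rfl, I.n_pos⟩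
  (I.α_pos 1 h1).trans_le (I.α_le h1)

theorem mul_mul_le_sq_mul_sq (I : IsKSumReduction n k α S β e h) : S * (S * n) ≤ S ^ 2 * n ^ 2 := by
  have hn : (1 : ℤ) ≤ n := by exact_mod_cast I.n_pos
  nlinarith [mul_le_mul_of_nonneg_left hn (by positivity : (0 : ℤ) ≤ S ^ 2 * n)]

theorem mul_k_lt_h_gap (I : IsKSumReduction n k α S β e h) : S * k < h (n + 2) := by
  have hS := I.S_pos
  have hkn : (k : ℤ) + 1 ≤ n := by exact_mod_cast I.k_lt
  have hSn : S ≤ S * n := le_mul_of_one_le_right hS.le (by linarith)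
  have hM : S * n ≤ S ^ 2 * n ^ 2 := by nlinarith
  rw [I.h_gap]
  nlinarith [mul_le_mul_of_nonneg_right (show (1 : ℤ) ≤ n - k by linarith)
      ((mul_pos hS (by linarith : (0 : ℤ) < n)).le.trans hM),
    mul_le_mul_of_nonneg_right (show (1 : ℤ) ≤ S - β by linarith [I.β_lt]) (hS.le.trans hSn)]

theorem h_nonneg (I : IsKSumReduction n k α S β e h) {τ : ℕ} (h1 : 1 ≤ τ)
    (hT : τ ≤ 2 * n - k + 2) : 0 ≤ h τ := by
  have hS := I.S_pos
  rcases (show τ = 1 ∨ (2 ≤ τ ∧ τ ≤ n + 1) ∨ τ = n + 2 ∨ n + 3 ≤ τ by omega) with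
    rfl | ⟨hlo, hhi⟩ | rfl | htail
  · rw [I.h_one]
    have := I.β_nonneg
    positivity
  · rw [I.h_mid τ hlo hhi]
    linarith [I.α_le (j := τ - 1) (mem_Icc.mpr ⟨by omega, by omega⟩)]
  · linarith [I.mul_k_lt_h_gap, mul_nonneg hS.le (Nat.cast_nonneg k)]
  · rw [I.h_tail τ htail hT]

theorem sum_h_mid (I : IsKSumReduction n k α S β e h) :
    ∑ τ ∈ Icc 2 (n + 1), h τ = S * n - S :=
  calc ∑ τ ∈ Icc 2 (n + 1), h τ = ∑ τ ∈ Ico (1 + 1) (n + 1 + 1), (S - α (τ - 1)) := by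
        rw [Ico_add_one_right_eq_Icc]
        exact sum_congr rfl fun τ hτ => I.h_mid τ (mem_Icc.mp hτ).1 (mem_Icc.mp hτ).2
    _ = ∑ j ∈ Ico 1 (n + 1), (S - α j) :=
        sum_Ico_add_right_sub_eq (f := fun j => S - α j) 1 (n + 1) 1
    _ = S * n - S := by
        rw [Ico_add_one_right_eq_Icc, sum_sub_distrib, ← I.S_eq, sum_const, Nat.card_Icc,
          Nat.add_sub_cancel, nsmul_eq_mul]
        ring

theorem sum_h_early (I : IsKSumReduction n k α S β e h) :
    ∑ τ ∈ Icc 1 (n + 1), h τ = k * (S ^ 2 * n ^ 2) + β * (S * n) + (S * n - S) := by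
  rw [← Ico_add_one_right_eq_Icc, sum_eq_sum_Ico_succ_bot (by omega), Ico_add_one_right_eq_Icc,
    I.h_one, I.sum_h_mid]

theorem sum_h (I : IsKSumReduction n k α S β e h) :
    ∑ τ ∈ Icc 1 (2 * n - k + 2), h τ = n * (S ^ 2 * n ^ 2) + S * (S * n) + S * k - β := by
  have hkn := I.k_lt
  have htail : ∑ τ ∈ Ico (n + 1 + 1 + 1) (2 * n - k + 2 + 1), h τ = 0 :=
    sum_eq_zero fun τ hτ => I.h_tail τ (mem_Ico.mp hτ).1 (by have := (mem_Ico.mp hτ).2; omega)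
  rw [← Ico_add_one_right_eq_Icc, ← sum_Ico_consecutive _ (show 1 ≤ n + 1 + 1 by omega)
    (show n + 1 + 1 ≤ 2 * n - k + 2 + 1 by omega),
    sum_eq_sum_Ico_succ_bot (show n + 1 + 1 < 2 * n - k + 2 + 1 by omega), htail,
    Ico_add_one_right_eq_Icc 1 (n + 1), I.sum_h_early, I.h_gap]
  ring

theorem sum_e_eq (I : IsKSumReduction n k α S β e h) (s : Finset ℕ) :
    ∑ i ∈ s, e i = #s * (S ^ 2 * n ^ 2) + (∑ i ∈ s, α i) * (S * n) := by
  rw [sum_congr rfl fun i _ => I.e_eq i, sum_add_distrib, sum_const, ← sum_mul, nsmul_eq_mul]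

theorem sum_e (I : IsKSumReduction n k α S β e h) :
    ∑ i ∈ Icc 1 n, e i = n * (S ^ 2 * n ^ 2) + S * (S * n) := by
  rw [I.sum_e_eq, ← I.S_eq, Nat.card_Icc, Nat.add_sub_cancel]

variable {r d σ : ℕ → ℕ}

theorem sum_h_apply_le (I : IsKSumReduction n k α S β e h)
    (hf : IsFeasible n (2 * n - k + 2) r d e h (Icc 1 n) σ) :
    ∑ i ∈ Icc 1 n, h (σ i) ≤ S * k - β := by
  have hE := hf.energyBefore_nonneg (2 * n - k + 2 + 1) fun τ h1 h2 => I.h_nonneg h1 (by omega)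
  rw [energyBefore_of_forall_lt fun i hi => Nat.lt_add_one_iff.mpr (hf.2.2 i hi).2.1,
    Nat.add_sub_cancel, I.sum_h, sum_add_distrib, I.sum_e] at hE
  linarith

theorem apply_ne_gap (I : IsKSumReduction n k α S β e h)
    (hf : IsFeasible n (2 * n - k + 2) r d e h (Icc 1 n) σ) {i : ℕ} (hi : i ∈ Icc 1 n) :
    σ i ≠ n + 2 := by
  intro hgap
  have hle : h (σ i) ≤ ∑ j ∈ Icc 1 n, h (σ j) :=
    single_le_sum (fun j hj => I.h_nonneg (hf.2.2 j hj).1 (hf.2.2 j hj).2.1) hi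
  rw [hgap] at hle
  linarith [I.sum_h_apply_le hf, I.mul_k_lt_h_gap, I.β_nonneg]

theorem cost_earlyJobs_le_harvest (I : IsKSumReduction n k α S β e h) (hr : ∀ i, r i = i + 1)
    (hf : IsFeasible n (2 * n - k + 2) r d e h (Icc 1 n) σ) :
    #(earlyJobs n σ) * (S ^ 2 * n ^ 2) + #(earlyJobs n σ) * S +
        (∑ i ∈ earlyJobs n σ, α i) * (S * n) - ∑ i ∈ earlyJobs n σ, α (σ i - 1) ≤
      k * (S ^ 2 * n ^ 2) + β * (S * n) + (S * n - S) := by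
  have hkn := I.k_lt
  have hE := hf.energyBefore_nonneg (n + 2) fun τ h1 h2 => I.h_nonneg h1 (by omega)
  have hearly : (Icc 1 n).filter (fun i => σ i < n + 2) = earlyJobs n σ :=
    filter_congr fun i hi => by
      have := hf.add_one_le_apply hr hi
      simp only [mem_Icc] at hi ⊢
      omega
  have hcost : ∀ i ∈ earlyJobs n σ,
      e i + h (σ i) = e i + (S - α (σ i - 1)) := fun i hi => by
    have hslot := mem_Icc.mp (mem_filter.mp hi).2
    rw [I.h_mid _ hslot.1 hslot.2]
  rw [energyBefore, hearly, show n + 2 - 1 = n + 1 by omega, I.sum_h_early, sum_congr rfl hcost,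
    sum_add_distrib, I.sum_e_eq, sum_sub_distrib, sum_const, nsmul_eq_mul] at hE
  linarith

theorem sum_h_apply_eq (I : IsKSumReduction n k α S β e h)
    (hσ : ∀ i ∈ Icc 1 n, 2 ≤ σ i ∧ σ i ≤ 2 * n - k + 2 ∧ σ i ≠ n + 2) :
    ∑ i ∈ Icc 1 n, h (σ i) = #(earlyJobs n σ) * S - ∑ i ∈ earlyJobs n σ, α (σ i - 1) := by
  have hlate : ∑ i ∈ lateJobs n (2 * n - k + 2) σ, h (σ i) = 0 := sum_eq_zero fun i hi =>
    I.h_tail _ (mem_Icc.mp (mem_filter.mp hi).2).1 (mem_Icc.mp (mem_filter.mp hi).2).2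
  have hearly : ∀ i ∈ earlyJobs n σ, h (σ i) = S - α (σ i - 1) := fun i hi =>
    I.h_mid _ (mem_Icc.mp (mem_filter.mp hi).2).1 (mem_Icc.mp (mem_filter.mp hi).2).2
  rw [← sum_earlyJobs_add_sum_lateJobs hσ, hlate, add_zero, sum_congr rfl hearly,
    sum_sub_distrib, sum_const, nsmul_eq_mul]

theorem card_earlyJobs_le_sum_α (I : IsKSumReduction n k α S β e h) :
    (#(earlyJobs n σ) : ℤ) ≤ ∑ i ∈ earlyJobs n σ, α i := by
  simpa using card_nsmul_le_sum (earlyJobs n σ) α 1 fun i hi =>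
    I.α_pos i (mem_filter.mp hi).1

theorem sum_α_shift_le_card_mul (I : IsKSumReduction n k α S β e h) :
    ∑ i ∈ earlyJobs n σ, α (σ i - 1) ≤ #(earlyJobs n σ) * S := by
  simpa using sum_le_card_nsmul (earlyJobs n σ) (fun i => α (σ i - 1)) S fun i hi => by
    have hslot := mem_Icc.mp (mem_filter.mp hi).2
    exact I.α_le (mem_Icc.mpr ⟨by omega, by omega⟩)

theorem sum_α_shift_le_sum_α (I : IsKSumReduction n k α S β e h) (hr : ∀ i, r i = i + 1)
    (hf : IsFeasible n (2 * n - k + 2) r d e h (Icc 1 n) σ) :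
    ∑ i ∈ earlyJobs n σ, α (σ i - 1) ≤ ∑ i ∈ earlyJobs n σ, α i :=
  sum_le_sum fun i hi => by
    have hi' := (mem_filter.mp hi).1
    have hslot := mem_Icc.mp (mem_filter.mp hi).2
    have := hf.add_one_le_apply hr hi'
    exact I.α_antitone i (σ i - 1) (mem_Icc.mp hi').1 (by omega) (by omega)

end IsKSumReduction

theorem ksum_reduction_structure_general (n k : ℕ) (α : ℕ → ℤ) (S β : ℤ)
    (hα_pos : ∀ i ∈ Finset.Icc 1 n, 0 < α i)
    (hα_sorted : ∀ i j, 1 ≤ i → i ≤ j → j ≤ n → α j ≤ α i)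
    (hS : S = ∑ i ∈ Finset.Icc 1 n, α i)
    (hβ : 0 < β) (hβS : β < S)
    (hkn : k < n)
    (r : ℕ → ℕ) (hr : ∀ i, r i = i + 1)
    (d : ℕ → ℕ)
    (e : ℕ → ℤ) (he : ∀ i, e i = S ^ 2 * n ^ 2 + α i * (S * n))
    (h : ℕ → ℤ)
    (hh1 : h 1 = k * (S ^ 2 * n ^ 2) + β * (S * n))
    (hh2 : ∀ t, 2 ≤ t → t ≤ n + 1 → h t = S - α (t - 1))
    (hh3 : h (n + 2) =
      (n - k) * (S ^ 2 * n ^ 2) + (S - β) * (S * n) - S * ((n : ℤ) - k - 1) - β)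
    (hh4 : ∀ t, n + 3 ≤ t → t ≤ 2 * n - k + 2 → h t = 0)
    (σ : ℕ → ℕ)
    (hfeas : IsFeasible n (2 * n - k + 2) r d e h (Finset.Icc 1 n) σ) :
    ((Finset.Icc 1 n).filter (fun i => σ i ∈ Finset.Icc 2 (n + 1))).card = k ∧
    ((Finset.Icc 1 n).filter
      (fun i => σ i ∈ Finset.Icc (n + 3) (2 * n - k + 2))).card = n - k ∧
    (∀ i ∈ Finset.Icc 1 n, σ i ≠ 1 ∧ σ i ≠ n + 2) ∧
    (∑ i ∈ (Finset.Icc 1 n).filter (fun i => σ i ∈ Finset.Icc 2 (n + 1)), e i =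
      k * (S ^ 2 * n ^ 2) + β * (S * n)) ∧
    (∑ i ∈ (Finset.Icc 1 n).filter (fun i => σ i ∈ Finset.Icc 2 (n + 1)), α i
      = β) := by
  have I : IsKSumReduction n k α S β e h :=
    ⟨hα_pos, hα_sorted, hS, hβ.le, hβS, hkn, he, hh1, hh2, hh3, hh4⟩
  have hσ : ∀ i ∈ Icc 1 n, 2 ≤ σ i ∧ σ i ≤ 2 * n - k + 2 ∧ σ i ≠ n + 2 := fun i hi =>
    ⟨(Nat.add_le_add_right (mem_Icc.mp hi).1 1).trans (hfeas.add_one_le_apply hr hi),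
      (hfeas.2.2 i hi).2.1, I.apply_ne_gap hfeas hi⟩
  have hcard := card_earlyJobs_add_card_lateJobs hσ
  have hlate := card_lateJobs_le (T := 2 * n - k + 2) hfeas.2.1
  obtain ⟨hk_early, hsum_le⟩ := eq_and_le_of_scaled_energy_le (M := S ^ 2 * n ^ 2) (P := S * n)
    I.S_pos (mul_pos I.S_pos (by exact_mod_cast I.n_pos)) I.mul_mul_le_sq_mul_sq hβS
    (by omega) I.card_earlyJobs_le_sum_α I.sum_α_shift_le_card_mul
    (I.cost_earlyJobs_le_harvest hr hfeas)
  have hβ_le : β ≤ ∑ i ∈ earlyJobs n σ, α (σ i - 1) := by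
    have := I.sum_h_apply_eq hσ
    rw [hk_early] at this
    linarith [I.sum_h_apply_le hfeas]
  have hsum_eq : ∑ i ∈ earlyJobs n σ, α i = β :=
    hsum_le.antisymm (hβ_le.trans (I.sum_α_shift_le_sum_α hr hfeas))
  refine ⟨hk_early, (by omega : #(lateJobs n (2 * n - k + 2) σ) = n - k),
    fun i hi => ⟨by have := hσ i hi; omega, (hσ i hi).2.2⟩, ?_, hsum_eq⟩
  exact (I.sum_e_eq (earlyJobs n σ)).trans (by rw [hk_early, hsum_eq])

/-- Structure of feasible schedules of all `n` jobs in the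
instance of the reduction from k-SUM: exactly `k` jobs run in slots `{2,…,n+1}`,
the other `n - k` jobs run in slots `{n+3,…,2n-k+2}` (no job at slot `1` or
`n+2`), the `k` early jobs have total energy requirement exactly
`k·S²n² + β·Sn`, and their `α`-values sum to `β`. -/
theorem ksum_reduction_structure (n k : ℕ) (α : ℕ → ℤ) (S β : ℤ)
    (hn : 2 < n)
    (hα_pos : ∀ i ∈ Finset.Icc 1 n, 0 < α i)
    (hα_sorted : ∀ i j, 1 ≤ i → i ≤ j → j ≤ n → α j ≤ α i)
    (hS : S = ∑ i ∈ Finset.Icc 1 n, α i) (hS2 : 2 < S)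
    (hβ : 0 < β) (hβS : β < S)
    (hk : 0 < k) (hkn : k < n)
    (r : ℕ → ℕ) (hr : ∀ i, r i = i + 1)
    (d : ℕ → ℕ) (hd : ∀ i, d i = 2 * n - k + 2)
    (e : ℕ → ℤ) (he : ∀ i, e i = S ^ 2 * n ^ 2 + α i * (S * n))
    (h : ℕ → ℤ)
    (hh1 : h 1 = k * (S ^ 2 * n ^ 2) + β * (S * n))
    (hh2 : ∀ t, 2 ≤ t → t ≤ n + 1 → h t = S - α (t - 1))
    (hh3 : h (n + 2) =
      (n - k) * (S ^ 2 * n ^ 2) + (S - β) * (S * n) - S * ((n : ℤ) - k - 1) - β)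
    (hh4 : ∀ t, n + 3 ≤ t → t ≤ 2 * n - k + 2 → h t = 0)
    (σ : ℕ → ℕ)
    (hfeas : IsFeasible n (2 * n - k + 2) r d e h (Finset.Icc 1 n) σ) :
    ((Finset.Icc 1 n).filter (fun i => σ i ∈ Finset.Icc 2 (n + 1))).card = k ∧
    ((Finset.Icc 1 n).filter
      (fun i => σ i ∈ Finset.Icc (n + 3) (2 * n - k + 2))).card = n - k ∧
    (∀ i ∈ Finset.Icc 1 n, σ i ≠ 1 ∧ σ i ≠ n + 2) ∧
    (∑ i ∈ (Finset.Icc 1 n).filter (fun i => σ i ∈ Finset.Icc 2 (n + 1)), e i =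
      k * (S ^ 2 * n ^ 2) + β * (S * n)) ∧
    (∑ i ∈ (Finset.Icc 1 n).filter (fun i => σ i ∈ Finset.Icc 2 (n + 1)), α i
      = β) :=
  ksum_reduction_structure_general n k α S β hα_pos hα_sorted hS hβ hβS hkn r hr d e he h hh1 hh2
    hh3 hh4 σ hfeas
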